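/- If w is a parenthesis-shuffle (a prefix-shuffle whose two projections are balanced), then the binary tree λ₁(w) has exactly two active leaves: the first left leaf and the last right leaf. -/

import Mathlib

/-!
Only the contour word of `λ₁(w)` matters: reading its leaves as (side, active) pairs, each
letter replaces one distinguished active leaf of that word.
By induction on a prefix-shuffle `w`, the active leaves read `L^(1+|w|_b-|w|_b̄) R^(1+|w|_a-|w|_ā)`
and the first and last leaves stay active: `ā` (resp. `b̄`) kills the first active right
(resp. last active left) leaf only when, by the prefix condition, at least two active right
(resp. left) leaves are present, so never an extreme one. For a parenthesis-shuffle both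
exponents are `1`, so exactly the first and the last leaf are active.
-/

/-- The four letters `a, ā, b, b̄`. -/
inductive L4 : Type
  | a | abar | b | bbar
deriving DecidableEq

/-- Prefix-shuffles: every prefix has at least as many `a`'s as `ā`'s and
at least as many `b`'s as `b̄`'s. -/
def IsPrefixShuffle (w : List L4) : Prop :=
  ∀ p ∈ w.inits, p.count L4.abar ≤ p.count L4.a ∧ p.count L4.bbar ≤ p.count L4.b

/-- Binary trees whose leaves carry an activity flag (`true` = active). -/
inductive BT : Type
  | leaf : Bool → BT
  | node : BT → BT → BT
deriving DecidableEq

/-- `B₁`: a single node with two active leaves. -/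
def B1 : BT := BT.node (BT.leaf true) (BT.leaf true)

/-- Apply `g` to the first (in contour/preorder) active leaf whose side is `want`
(`true` = left leaf, `false` = right leaf); `side` is the side of the current subtree. -/
def goFirst (want : Bool) (g : Bool → BT) : Bool → BT → Option BT
  | side, BT.leaf act => if act && (side == want) then some (g act) else none
  | _, BT.node l r =>
    match goFirst want g true l with
    | some l' => some (BT.node l' r)
    | none => (goFirst want g false r).map (fun r' => BT.node l r')

/-- Apply `g` to the last (in contour/preorder) active leaf whose side is `want`. -/
def goLast (want : Bool) (g : Bool → BT) : Bool → BT → Option BT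
  | side, BT.leaf act => if act && (side == want) then some (g act) else none
  | _, BT.node l r =>
    match goLast want g false r with
    | some r' => some (BT.node l r')
    | none => (goLast want g true l).map (fun l' => BT.node l' r)

/-- One step of the recursive construction of `λ₁`:
`a` replaces the last active left leaf by `B₁`, `b` replaces the first active right
leaf by `B₁`, `ā` inactivates the first active right leaf, `b̄` inactivates the last
active left leaf.  (The root position counts as left.) -/
def lamStep (t : BT) : L4 → BT
  | L4.a => (goLast true (fun _ => B1) true t).getD t
  | L4.b => (goFirst false (fun _ => B1) true t).getD t
  | L4.abar => (goFirst false (fun _ => BT.leaf false) true t).getD t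
  | L4.bbar => (goLast true (fun _ => BT.leaf false) true t).getD t

/-- The binary tree `λ₁(w)`. -/
def lam1 (w : List L4) : BT := w.foldl lamStep B1

/-- The list of leaves in contour (preorder) order; each leaf is recorded as
`(side, active)` with `side = true` meaning a left leaf. -/
def leavesList : Bool → BT → List (Bool × Bool)
  | side, BT.leaf act => [(side, act)]
  | _, BT.node l r => leavesList true l ++ leavesList false r

/-- A parenthesis-shuffle: a prefix-shuffle whose two projections are balanced. -/
def IsShuffle (w : List L4) : Prop :=
  IsPrefixShuffle w ∧ w.count L4.a = w.count L4.abar ∧ w.count L4.b = w.count L4.bbar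

open List

section Replace

variable {α : Type*} [DecidableEq α] (a : α) (r : List α)

def replaceFirst : List α → Option (List α)
  | [] => none
  | b :: l => if b = a then some (r ++ l) else (replaceFirst l).map (b :: ·)

def replaceLast : List α → Option (List α)
  | [] => none
  | b :: l =>
    match replaceLast l with
    | some l' => some (b :: l')
    | none => if b = a then some (r ++ l) else none

theorem replaceFirst_append (l₁ l₂ : List α) :
    replaceFirst a r (l₁ ++ l₂) =
      ((replaceFirst a r l₁).map (· ++ l₂)).or ((replaceFirst a r l₂).map (l₁ ++ ·)) := by
  induction l₁ with
  | nil => simp [replaceFirst]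
  | cons b l ih =>
    by_cases hb : b = a
    · simp [replaceFirst, hb]
    · cases h : replaceFirst a r l <;> simp_all [replaceFirst, Function.comp_def]

theorem replaceLast_append (l₁ l₂ : List α) :
    replaceLast a r (l₁ ++ l₂) =
      ((replaceLast a r l₂).map (l₁ ++ ·)).or ((replaceLast a r l₁).map (· ++ l₂)) := by
  induction l₁ with
  | nil => cases h : replaceLast a r l₂ <;> simp [replaceLast, h]
  | cons b l ih =>
    cases h₂ : replaceLast a r l₂ <;> cases h : replaceLast a r l <;> by_cases hb : b = a <;>
      simp_all [replaceLast]

variable {a r}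

theorem replaceFirst_eq_none {l : List α} (h : a ∉ l) : replaceFirst a r l = none := by
  induction l with
  | nil => rfl
  | cons b l ih =>
    rw [mem_cons, not_or] at h
    simp [replaceFirst, Ne.symm h.1, ih h.2]

theorem replaceLast_eq_none {l : List α} (h : a ∉ l) : replaceLast a r l = none := by
  induction l with
  | nil => rfl
  | cons b l ih =>
    rw [mem_cons, not_or] at h
    simp [replaceLast, Ne.symm h.1, ih h.2]

theorem replaceFirst_append_cons {l₁ : List α} (l₂ : List α) (h : a ∉ l₁) :
    replaceFirst a r (l₁ ++ a :: l₂) = some (l₁ ++ r ++ l₂) := by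
  simp [replaceFirst_append, replaceFirst_eq_none h, replaceFirst]

theorem replaceLast_append_cons (l₁ : List α) {l₂ : List α} (h : a ∉ l₂) :
    replaceLast a r (l₁ ++ a :: l₂) = some (l₁ ++ r ++ l₂) := by
  simp [replaceLast_append, replaceLast_eq_none h, replaceLast]

end Replace

theorem leavesList_goFirst (want : Bool) (g : Bool → BT) (s : Bool) (t : BT) :
    (goFirst want g s t).map (leavesList s) =
      replaceFirst (want, true) (leavesList want (g true)) (leavesList s t) := by
  induction t generalizing s with
  | leaf act => cases act <;> cases s <;> cases want <;> simp [goFirst, leavesList, replaceFirst]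
  | node l r ihl ihr =>
    simp only [goFirst, leavesList, replaceFirst_append, ← ihl, ← ihr]
    cases goFirst want g true l <;> simp [leavesList, Function.comp_def]

theorem leavesList_goLast (want : Bool) (g : Bool → BT) (s : Bool) (t : BT) :
    (goLast want g s t).map (leavesList s) =
      replaceLast (want, true) (leavesList want (g true)) (leavesList s t) := by
  induction t generalizing s with
  | leaf act => cases act <;> cases s <;> cases want <;> simp [goLast, leavesList, replaceLast]
  | node l r ihl ihr =>
    simp only [goLast, leavesList, replaceLast_append, ← ihl, ← ihr]
    cases goLast want g false r <;> simp [leavesList, Function.comp_def]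

theorem exists_eq_append_cons_of_filter_eq {α : Type*} {p : α → Bool} {l s t : List α} {a : α}
    (h : l.filter p = s ++ a :: t) :
    ∃ x y, l = x ++ a :: y ∧ x.filter p = s ∧ y.filter p = t := by
  obtain ⟨x, z, rfl, hx, hz⟩ := filter_eq_append_iff.1 h
  obtain ⟨u, y, rfl, hu, -, hy⟩ := filter_eq_cons_iff.1 hz
  exact ⟨x ++ u, y, by simp, by simp [hx, filter_eq_nil_iff.2 hu], hy⟩

theorem not_mem_of_filter_eq_replicate {α : Type*} {p : α → Bool} {l : List α} {n : ℕ}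
    {a b : α} (h : l.filter p = replicate n b) (ha : p a) (hab : a ≠ b) : a ∉ l := fun hal =>
  hab (eq_of_mem_replicate (h ▸ mem_filter.2 ⟨hal, ha⟩))

abbrev activeLeft : Bool × Bool := (true, true)
abbrev activeRight : Bool × Bool := (false, true)

def leafStep (l : List (Bool × Bool)) : L4 → List (Bool × Bool)
  | .a => (replaceLast activeLeft [activeLeft, activeRight] l).getD l
  | .b => (replaceFirst activeRight [activeLeft, activeRight] l).getD l
  | .abar => (replaceFirst activeRight [(false, false)] l).getD l
  | .bbar => (replaceLast activeLeft [(true, false)] l).getD l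

theorem leavesList_lamStep (t : BT) (c : L4) :
    leavesList true (lamStep t c) = leafStep (leavesList true t) c := by
  cases c <;> simp only [lamStep, leafStep, ← Option.getD_map (leavesList true) t,
    leavesList_goFirst, leavesList_goLast] <;> rfl

structure LeafInv (nl nr : ℕ) (l : List (Bool × Bool)) : Prop where
  filter_active : l.filter (·.2) = replicate nl activeLeft ++ replicate nr activeRight
  head?_eq : l.head? = some activeLeft
  getLast?_eq : l.getLast? = some activeRight

namespace LeafInv

variable {nl nr : ℕ} {l : List (Bool × Bool)}

theorem one_le_left (h : LeafInv nl nr l) : 1 ≤ nl := by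
  obtain ⟨t, rfl⟩ := head?_eq_some_iff.1 h.head?_eq
  have := h.filter_active
  rcases nl with _ | _
  · rcases nr with _ | _ <;> simp [replicate_succ] at this
  · omega

theorem one_le_right (h : LeafInv nl nr l) : 1 ≤ nr := by
  obtain ⟨t, rfl⟩ := getLast?_eq_some_iff.1 h.getLast?_eq
  have := h.filter_active
  rcases nr with _ | _
  · rcases nl with _ | _ <;> simp [replicate_succ'] at this
  · omega

theorem replace {nl' nr' : ℕ} {x y r : List (Bool × Bool)} {e : Bool × Bool}
    (h : LeafInv nl nr (x ++ e :: y))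
    (hf : (x ++ r ++ y).filter (·.2) = replicate nl' activeLeft ++ replicate nr' activeRight)
    (hx : x = [] → r.head? = some activeLeft) (hy : y = [] → r.getLast? = some activeRight) :
    LeafInv nl' nr' (x ++ r ++ y) := by
  refine ⟨hf, ?_, ?_⟩
  · rcases eq_or_ne x [] with rfl | hx'
    · simp [head?_append, hx rfl]
    · rw [append_assoc, head?_append_of_ne_nil _ hx', ← h.head?_eq, head?_append_of_ne_nil _ hx']
  · rcases eq_or_ne y [] with rfl | hy'
    · simp [getLast?_append, hy rfl]
    · rw [getLast?_append_of_ne_nil _ hy', ← h.getLast?_eq, ← singleton_append, ← append_assoc,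
        getLast?_append_of_ne_nil _ hy']

theorem eq_cons_append (h : LeafInv 1 1 l) :
    ∃ mid, l = activeLeft :: (mid ++ [activeRight]) ∧ ∀ p ∈ mid, p.2 = false := by
  obtain ⟨t, rfl⟩ := head?_eq_some_iff.1 h.head?_eq
  have ht : t.filter (·.2) = [activeRight] := by simpa using h.filter_active
  obtain ⟨mid, z, rfl, hmid, -, hz⟩ := filter_eq_cons_iff.1 ht
  obtain rfl : z = [] := by
    rcases eq_nil_or_concat z with rfl | ⟨zs, q, rfl⟩
    · rfl
    · have hq := h.getLast?_eq
      simp [getLast?_cons, getLast?_append] at hq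
      simp [hq] at hz
  exact ⟨mid, rfl, by simpa using hmid⟩

theorem leafStep_a (h : LeafInv nl nr l) : LeafInv nl (nr + 1) (leafStep l .a) := by
  obtain ⟨k, rfl⟩ := Nat.exists_eq_add_of_le' h.one_le_left
  have hf : l.filter (·.2) = replicate k activeLeft ++ activeLeft :: replicate nr activeRight := by
    simp [h.filter_active, replicate_succ']
  obtain ⟨x, y, rfl, hx, hy⟩ := exists_eq_append_cons_of_filter_eq hf
  rw [leafStep, replaceLast_append_cons _ (not_mem_of_filter_eq_replicate hy rfl (by decide))]
  exact h.replace (by simp [hx, hy, replicate_succ', ← replicate_succ])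
    (fun _ => rfl) (fun _ => rfl)

theorem leafStep_b (h : LeafInv nl nr l) : LeafInv (nl + 1) nr (leafStep l .b) := by
  obtain ⟨k, rfl⟩ := Nat.exists_eq_add_of_le' h.one_le_right
  have hf : l.filter (·.2) = replicate nl activeLeft ++ activeRight :: replicate k activeRight := by
    simp [h.filter_active, replicate_succ]
  obtain ⟨x, y, rfl, hx, hy⟩ := exists_eq_append_cons_of_filter_eq hf
  rw [leafStep, replaceFirst_append_cons _ (not_mem_of_filter_eq_replicate hx rfl (by decide))]
  exact h.replace (by simp [hx, hy, replicate_succ', ← replicate_succ])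
    (fun _ => rfl) (fun _ => rfl)

theorem leafStep_abar (h : LeafInv nl nr l) (hnr : 2 ≤ nr) :
    LeafInv nl (nr - 1) (leafStep l .abar) := by
  obtain ⟨k, rfl⟩ := Nat.exists_eq_add_of_le' hnr
  have hf : l.filter (·.2) =
      replicate nl activeLeft ++ activeRight :: replicate (k + 1) activeRight := by
    simp [h.filter_active, replicate_succ]
  obtain ⟨x, y, rfl, hx, hy⟩ := exists_eq_append_cons_of_filter_eq hf
  rw [leafStep, replaceFirst_append_cons _ (not_mem_of_filter_eq_replicate hx rfl (by decide))]
  refine h.replace (by simp [hx, hy]) (fun hx0 => ?_) (fun hy0 => ?_)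
  · simp [hx0] at hx; have := h.one_le_left; omega
  · simp [hy0] at hy

theorem leafStep_bbar (h : LeafInv nl nr l) (hnl : 2 ≤ nl) :
    LeafInv (nl - 1) nr (leafStep l .bbar) := by
  obtain ⟨k, rfl⟩ := Nat.exists_eq_add_of_le' hnl
  have hf : l.filter (·.2) =
      replicate (k + 1) activeLeft ++ activeLeft :: replicate nr activeRight := by
    simp [h.filter_active, replicate_succ']
  obtain ⟨x, y, rfl, hx, hy⟩ := exists_eq_append_cons_of_filter_eq hf
  rw [leafStep, replaceLast_append_cons _ (not_mem_of_filter_eq_replicate hy rfl (by decide))]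
  refine h.replace (by simp [hx, hy]) (fun hx0 => ?_) (fun hy0 => ?_)
  · simp [hx0] at hx
  · simp [hy0] at hy; have := h.one_le_right; omega

end LeafInv

theorem IsPrefixShuffle.count_le {w : List L4} (hw : IsPrefixShuffle w) :
    w.count .abar ≤ w.count .a ∧ w.count .bbar ≤ w.count .b :=
  hw w ((mem_inits _ _).2 (prefix_refl w))

theorem IsPrefixShuffle.of_prefix {u w : List L4} (hw : IsPrefixShuffle w) (hu : u <+: w) :
    IsPrefixShuffle u := fun p hp =>
  hw p (mem_inits _ _ |>.2 ((mem_inits _ _).1 hp |>.trans hu))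

theorem leafInv_lam1 {w : List L4} (hw : IsPrefixShuffle w) :
    LeafInv (w.count .b + 1 - w.count .bbar) (w.count .a + 1 - w.count .abar)
      (leavesList true (lam1 w)) := by
  induction w using reverseRecOn with
  | nil => exact ⟨rfl, rfl, rfl⟩
  | append_singleton w c ih =>
    have hw' := hw.of_prefix (prefix_append w [c])
    have h := ih hw'
    have hc := hw.count_le
    have hc' := hw'.count_le
    rw [lam1, foldl_append, foldl_cons, foldl_nil, ← lam1, leavesList_lamStep]
    cases c
    · convert h.leafStep_a using 1 <;> simp [count_append]; omega
    · have : 2 ≤ w.count .a + 1 - w.count .abar := by simp [count_append] at hc; omega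
      convert h.leafStep_abar this using 1 <;> simp [count_append]; omega
    · convert h.leafStep_b using 1 <;> simp [count_append]; omega
    · have : 2 ≤ w.count .b + 1 - w.count .bbar := by simp [count_append] at hc; omega
      convert h.leafStep_bbar this using 1 <;> simp [count_append]; omega

theorem snd_getElem_eq_true_iff {mid : List (Bool × Bool)} (hmid : ∀ p ∈ mid, p.2 = false)
    {i : ℕ} (hi : i < (activeLeft :: (mid ++ [activeRight])).length) :
    (activeLeft :: (mid ++ [activeRight]))[i].2 = true ↔ i = 0 ∨ i = mid.length + 1 := by
  rcases i with _ | n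
  · simp
  · rw [getElem_cons_succ]
    rcases lt_or_eq_of_le (Nat.lt_succ_iff.1 (by simpa using hi)) with hn | rfl
    · rw [getElem_append_left hn, hmid _ (getElem_mem hn), Bool.false_eq_true, false_iff]
      omega
    · simp

/-- If `w` is a parenthesis-shuffle then the active leaves of `λ₁(w)` are exactly the
first left leaf and the last right leaf. -/
theorem lam1_two_active_leaves (w : List L4) (hw : IsShuffle w) :
    ∀ i : ℕ, ∀ hi : i < (leavesList true (lam1 w)).length,
      ((leavesList true (lam1 w)).get ⟨i, hi⟩).2 = true ↔
        (i = (leavesList true (lam1 w)).findIdx (fun p => p.1) ∨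
         i = (leavesList true (lam1 w)).length - 1 -
              (leavesList true (lam1 w)).reverse.findIdx (fun p => !p.1)) := by
  obtain ⟨hpre, ha, hb⟩ := hw
  have h := leafInv_lam1 hpre
  simp only [hb, ha, Nat.add_sub_cancel_left] at h
  obtain ⟨mid, hl, hmid⟩ := h.eq_cons_append
  rw [hl]
  intro i hi
  simp [findIdx_cons, snd_getElem_eq_true_iff hmid]
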